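/- Let α > 0 and let g: 𝔻 → ℂ be continuous with |g(z)| ≤ M (1-|z|²)^{-α} for all z ∈ 𝔻. Then ∬_{𝔻} (1-|z|²)^{α+1} (1-|w|²)^{α} / (2|1 - z̄w|^{α+1} |z - w|) · |g(z)| dx dy ≤ c M for a constant c independent of w ∈ 𝔻; i.e., the majorant of |∂_{w̄} G_α[g](w)| obtained from the pointwise Green kernel estimate is uniformly bounded on 𝔻. -/

import Mathlib

/-!
Both `1 - ‖z‖²` and `1 - ‖w‖²` are at most `2 ‖1 - z̄ w‖` on the disk, and `‖g z‖ (1 - ‖z‖²)^α ≤ M`,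
so the integrand is at most `2^α M / ‖z - w‖`. Since the unit disk lies in the disk of radius 2
about `w`, translation bounds `∫ 1 / ‖z - w‖` over it by `∫ 1 / ‖ζ‖` over the disk of radius 2
about `0`, which is finite because `‖ζ‖⁻¹` is locally integrable in real dimension 2.
-/

open Real Complex Set MeasureTheory Metric Module ComplexConjugate

lemma Metric.preimage_sub_right_ball {E : Type*} [SeminormedAddCommGroup E] (x : E) (r : ℝ) :
    (· - x) ⁻¹' ball 0 r = ball x r := by
  ext y; simp [dist_eq_norm]

namespace MeasureTheory

lemma setIntegral_ball_inv_norm_sub {E : Type*} [NormedAddCommGroup E] [MeasurableSpace E]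
    [BorelSpace E] {μ : Measure E} [μ.IsAddRightInvariant] (x : E) (r : ℝ) :
    ∫ y in ball x r, ‖y - x‖⁻¹ ∂μ = ∫ y in ball 0 r, ‖y‖⁻¹ ∂μ := by
  rw [← preimage_sub_right_ball]
  exact (measurePreserving_sub_right μ x).setIntegral_preimage_emb
    (Homeomorph.subRight x).measurableEmbedding (fun y ↦ ‖y‖⁻¹) _

variable {E : Type*} [NormedAddCommGroup E] [NormedSpace ℝ E] [FiniteDimensional ℝ E]
  [MeasurableSpace E] [BorelSpace E] {μ : Measure E} [μ.IsAddHaarMeasure]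

lemma integrableOn_ball_inv_norm (hE : 2 ≤ finrank ℝ E) (r : ℝ) :
    IntegrableOn (fun x : E ↦ ‖x‖⁻¹) (ball 0 r) μ := by
  refine integrableOn_ball_of_norm_le_rpow (C := 1) (α := 1) (by omega) (by exact_mod_cast hE)
    (ae_of_all _ fun x ↦ ?_) (by fun_prop)
  simp [Real.rpow_neg_one]

lemma integrableOn_ball_inv_norm_sub (hE : 2 ≤ finrank ℝ E) (x : E) (r : ℝ) :
    IntegrableOn (fun y : E ↦ ‖y - x‖⁻¹) (ball x r) μ := by
  rw [← preimage_sub_right_ball]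
  exact ((measurePreserving_sub_right μ x).integrableOn_comp_preimage
    (Homeomorph.subRight x).measurableEmbedding).2 (integrableOn_ball_inv_norm hE r)

lemma setIntegral_inv_norm_sub_le (hE : 2 ≤ finrank ℝ E) {s : Set E} {x : E} {r : ℝ}
    (hs : s ⊆ ball x r) :
    ∫ y in s, ‖y - x‖⁻¹ ∂μ ≤ ∫ y in ball 0 r, ‖y‖⁻¹ ∂μ := by
  rw [← setIntegral_ball_inv_norm_sub x r]
  exact setIntegral_mono_set (integrableOn_ball_inv_norm_sub hE x r)
    (ae_of_all _ fun y ↦ by positivity) hs.eventuallyLE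

end MeasureTheory

lemma rpow_kernel_mul_le {α a b D r G M : ℝ} (hα : 0 ≤ α) (ha : 0 < a) (hb : 0 ≤ b)
    (haD : a ≤ 2 * D) (hbD : b ≤ 2 * D) (hr : 0 ≤ r) (hM : 0 ≤ M) (hG : G ≤ M * a ^ (-α)) :
    a ^ (α + 1) * b ^ α / (2 * D ^ (α + 1) * r) * G ≤ 2 ^ α * M * r⁻¹ := by
  have hD : 0 < D := by linarith
  have hbD' : b / D ≤ 2 := (div_le_iff₀ hD).2 hbD
  have haD' : a / (2 * D) ≤ 1 := (div_le_one (by positivity)).2 haD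
  calc a ^ (α + 1) * b ^ α / (2 * D ^ (α + 1) * r) * G
      ≤ a ^ (α + 1) * b ^ α / (2 * D ^ (α + 1) * r) * (M * a ^ (-α)) := by gcongr
    _ = (b / D) ^ α * M * (a / (2 * D)) * r⁻¹ := by
        rw [Real.div_rpow hb hD.le, Real.rpow_add ha, Real.rpow_add hD, Real.rpow_neg ha.le,
          Real.rpow_one, Real.rpow_one]
        field_simp
    _ ≤ 2 ^ α * M * 1 * r⁻¹ := by gcongr
    _ = 2 ^ α * M * r⁻¹ := by rw [mul_one]

lemma Complex.one_sub_norm_mul_norm_le_norm_one_sub_conj_mul (z w : ℂ) :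
    1 - ‖z‖ * ‖w‖ ≤ ‖1 - conj z * w‖ := by
  simpa using norm_sub_norm_le (1 : ℂ) (conj z * w)

section GreenKernel

variable {α M G : ℝ} {z w : ℂ}

lemma greenKernel_majorant_nonneg (hz : ‖z‖ < 1) (hw : ‖w‖ < 1) (hG : 0 ≤ G) :
    0 ≤ (1 - ‖z‖ ^ 2) ^ (α + 1) * (1 - ‖w‖ ^ 2) ^ α /
      (2 * ‖1 - conj z * w‖ ^ (α + 1) * ‖z - w‖) * G := by
  have hz' : 0 ≤ 1 - ‖z‖ ^ 2 := by nlinarith [norm_nonneg z]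
  have hw' : 0 ≤ 1 - ‖w‖ ^ 2 := by nlinarith [norm_nonneg w]
  positivity

lemma greenKernel_majorant_le (hα : 0 ≤ α) (hM : 0 ≤ M) (hz : ‖z‖ < 1) (hw : ‖w‖ < 1)
    (hG : G ≤ M * (1 - ‖z‖ ^ 2) ^ (-α)) :
    (1 - ‖z‖ ^ 2) ^ (α + 1) * (1 - ‖w‖ ^ 2) ^ α /
      (2 * ‖1 - conj z * w‖ ^ (α + 1) * ‖z - w‖) * G ≤ 2 ^ α * M * ‖z - w‖⁻¹ := by
  have hD := one_sub_norm_mul_norm_le_norm_one_sub_conj_mul z w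
  have := norm_nonneg z
  have := norm_nonneg w
  exact rpow_kernel_mul_le hα (by nlinarith) (by nlinarith) (by nlinarith) (by nlinarith)
    (norm_nonneg _) hM hG

end GreenKernel

theorem stmt_16 (α : ℝ) (hα : 0 < α) :
    ∃ c > 0, ∀ M : ℝ, 0 ≤ M → ∀ g : ℂ → ℂ,
      ContinuousOn g (Metric.ball (0:ℂ) 1) →
      (∀ z ∈ Metric.ball (0:ℂ) 1, ‖g z‖ ≤ M * (1 - ‖z‖^2) ^ (-α)) →
      ∀ w ∈ Metric.ball (0:ℂ) 1,
        (∫ z in Metric.ball (0:ℂ) 1,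
          (1 - ‖z‖^2) ^ (α+1) * (1 - ‖w‖^2) ^ α /
            (2 * ‖1 - (starRingEnd ℂ) z * w‖ ^ (α+1) * ‖z - w‖) * ‖g z‖)
          ≤ c * M := by
  set K := ∫ z in ball (0 : ℂ) 2, ‖z‖⁻¹
  have hK : 0 ≤ K := setIntegral_nonneg measurableSet_ball fun _ _ ↦ by positivity
  refine ⟨2 ^ α * (K + 1), by positivity, fun M hM g _ hg w hw ↦ ?_⟩
  have hw' : ‖w‖ < 1 := mem_ball_zero_iff.1 hw
  have hdim : 2 ≤ finrank ℝ ℂ := Complex.finrank_real_complex.ge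
  have hsub : ball (0 : ℂ) 1 ⊆ ball w 2 :=
    ball_subset_ball' (by rw [dist_comm, dist_zero_right]; linarith)
  calc _ ≤ ∫ z in ball (0 : ℂ) 1, 2 ^ α * M * ‖z - w‖⁻¹ := by
        refine integral_mono_of_nonneg ?_
          (((integrableOn_ball_inv_norm_sub hdim w 2).mono_set hsub).const_mul _) ?_ <;>
          refine (ae_restrict_iff' measurableSet_ball).2 (ae_of_all _ fun z hz ↦ ?_)
        · exact greenKernel_majorant_nonneg (mem_ball_zero_iff.1 hz) hw' (norm_nonneg _)
        · exact greenKernel_majorant_le hα.le hM (mem_ball_zero_iff.1 hz) hw' (hg z hz)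
    _ = 2 ^ α * M * ∫ z in ball (0 : ℂ) 1, ‖z - w‖⁻¹ := integral_const_mul _ _
    _ ≤ 2 ^ α * M * (K + 1) := by
        gcongr
        exact (setIntegral_inv_norm_sub_le hdim hsub).trans (le_add_of_nonneg_right zero_le_one)
    _ = 2 ^ α * (K + 1) * M := by ring
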